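/- arXiv:1304.0061 — 3 statements merged into one kernel-verified Lean document; each statement's English description precedes it below -/
import Mathlib

section
/- For any Coxeter group W and u ≤ v in W, the polynomial R̃_{u,v}(q) has nonnegative integer coefficients. -/
open Polynomial

variable {B W : Type*} [Group W] {M : CoxeterMatrix B}

/-- An edge of the Bruhat graph: `v = u * t` for a reflection `t`, with `ℓ(u) < ℓ(v)`. -/
def BruhatEdge (cs : CoxeterSystem M W) (u v : W) : Prop :=
  ∃ t : W, cs.IsReflection t ∧ v = u * t ∧ cs.length u < cs.length v

/-- The Bruhat order on a Coxeter group. -/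
def BruhatLE (cs : CoxeterSystem M W) : W → W → Prop :=
  Relation.ReflTransGen (BruhatEdge cs)

private lemma bruhatLE_length_le (cs : CoxeterSystem M W) {a b : W} (h : BruhatLE cs a b) :
    cs.length a ≤ cs.length b := by
  induction h with
  | refl => exact le_rfl
  | tail _ hbc ih =>
    obtain ⟨t, _, _, hl⟩ := hbc
    exact ih.trans (le_of_lt hl)

private lemma bruhatLE_length_lt (cs : CoxeterSystem M W) {a b : W} (h : BruhatLE cs a b)
    (hne : a ≠ b) : cs.length a < cs.length b := by
  induction h with
  | refl => exact absurd rfl hne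
  | @tail c d hac hcd ih =>
    obtain ⟨t, _, _, hl⟩ := hcd
    exact lt_of_le_of_lt (bruhatLE_length_le cs hac) hl

/-- The `R̃`-polynomials have nonnegative coefficients. -/
theorem Rt_coeff_nonneg (cs : CoxeterSystem M W) (Rt : W → W → Polynomial ℤ)
    (hRt0 : ∀ u v, ¬ BruhatLE cs u v → Rt u v = 0)
    (hRt1 : ∀ u, Rt u u = 1)
    (hRt2 : ∀ u v i, BruhatLE cs u v → u ≠ v → cs.IsRightDescent v i →
      (cs.IsRightDescent u i → Rt u v = Rt (u * cs.simple i) (v * cs.simple i)) ∧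
      (¬ cs.IsRightDescent u i →
        Rt u v = Rt (u * cs.simple i) (v * cs.simple i) + X * Rt u (v * cs.simple i)))
    (u v : W) (huv : BruhatLE cs u v) :
    ∀ n : ℕ, 0 ≤ (Rt u v).coeff n := by
  suffices H : ∀ N : ℕ, ∀ u v : W, cs.length v ≤ N → BruhatLE cs u v → ∀ n : ℕ, 0 ≤ (Rt u v).coeff n by
    exact H (cs.length v) u v le_rfl huv
  intro N
  induction N with
  | zero =>
    intro u v hv huv n
    rcases eq_or_ne u v with rfl | hne
    · rw [hRt1]; simp [Polynomial.coeff_one]; positivity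
    · exact absurd (bruhatLE_length_lt cs huv hne) (by omega)
  | succ N ih =>
    intro u v hv huv n
    rcases eq_or_ne u v with rfl | hne
    · rw [hRt1]; simp [Polynomial.coeff_one]; positivity
    · have hv1 : v ≠ 1 := by
        rintro rfl
        have := bruhatLE_length_lt cs huv hne
        simp at this
      obtain ⟨i, hi⟩ := cs.exists_rightDescent_of_ne_one hv1
      have hvs : cs.length (v * cs.simple i) ≤ N := by
        have := hi; unfold CoxeterSystem.IsRightDescent at this; omega
      have key : ∀ a b : W, cs.length b ≤ N → ∀ n : ℕ, 0 ≤ (Rt a b).coeff n := by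
        intro a b hb n
        by_cases hab : BruhatLE cs a b
        · exact ih a b hb hab n
        · rw [hRt0 a b hab]; simp
      obtain ⟨h1, h2⟩ := hRt2 u v i huv hne hi
      by_cases hu : cs.IsRightDescent u i
      · rw [h1 hu]
        exact key _ _ hvs n
      · rw [h2 hu]
        rw [Polynomial.coeff_add]
        have hA := key (u * cs.simple i) (v * cs.simple i) hvs n
        have hB : 0 ≤ (X * Rt u (v * cs.simple i)).coeff n := by
          cases n with
          | zero => simp
          | succ m =>
            rw [Polynomial.coeff_X_mul]
            exact key u (v * cs.simple i) hvs m
        linarith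
end

section
/- For any Coxeter group W and u ≤ v in W, the sum over all w with u ≤ w ≤ v of (-1)^(ℓ(w)-ℓ(u)) · R̃_{u,w}(q) · R̃_{w,v}(q) equals 1 if u = v and 0 otherwise. -/
open Polynomial

variable {B W : Type*} [Group W] {M : CoxeterMatrix B}

open List

section InvAuxSection

attribute [local instance] Classical.propDecidable

namespace InvAux

variable (cs : CoxeterSystem M W)

local prefix:100 "s" => cs.simple
local prefix:100 "π" => cs.wordProd
local prefix:100 "ℓ" => cs.length
local prefix:100 "ris" => cs.rightInvSeq

lemma conj_simple_eq_simple_iff (i : B) (w : W) :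
    (s i * w * s i = s i) ↔ (w = s i) := by
  constructor
  · intro h
    have h' : s i * w * s i = 1 * s i := by rw [one_mul]; exact h
    have h2 := mul_right_cancel h'
    have h3 := inv_eq_of_mul_eq_one_right h2
    rw [cs.inv_simple] at h3
    exact h3.symm
  · rintro rfl
    rw [cs.simple_mul_simple_self, one_mul]

lemma conj_eq_simple_iff (i j : B) (w : W) :
    (s j * w * s j = s i) ↔ (w = s j * s i * s j) := by
  constructor
  · intro h
    have : w = (s j)⁻¹ * s i * (s j)⁻¹ := by rw [← h]; group
    rwa [cs.inv_simple] at this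
  · rintro rfl
    rw [show s j * (s j * s i * s j) * s j = s j * s j * s i * (s j * s j) by group,
      cs.simple_mul_simple_self, one_mul, mul_one]

/-- The involution of `W × ℤˣ` attached to a simple reflection. -/
noncomputable def flip (i : B) : Equiv.Perm (W × ℤˣ) :=
  Function.Involutive.toPerm
    (fun p => (s i * p.1 * s i, if p.1 = s i then -p.2 else p.2))
    (by
      rintro ⟨w, ε⟩
      simp only [Prod.mk.injEq]
      constructor
      · rw [show s i * (s i * w * s i) * s i = (s i * s i) * w * (s i * s i) by group,
          cs.simple_mul_simple_self, one_mul, mul_one]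
      · rw [conj_simple_eq_simple_iff]
        by_cases hw : w = s i <;> simp [hw])

lemma flip_apply (i : B) (w : W) (ε : ℤˣ) :
    flip cs i (w, ε) = (s i * w * s i, if w = s i then -ε else ε) := rfl

lemma flip_flip_pow_apply (i j : B) (k : ℕ) (w : W) (ε : ℤˣ) :
    ((flip cs i * flip cs j) ^ k) (w, ε) =
      ((s i * s j) ^ k * w * ((s i * s j) ^ k)⁻¹,
        ε * ∏ l ∈ Finset.range k,
          ((if (s i * s j) ^ l * w * ((s i * s j) ^ l)⁻¹ = s j then (-1 : ℤˣ) else 1) *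
           (if (s i * s j) ^ l * w * ((s i * s j) ^ l)⁻¹ = s j * s i * s j then (-1 : ℤˣ) else 1))) := by
  induction k generalizing w ε with
  | zero => simp
  | succ k ih =>
    rw [pow_succ, Equiv.Perm.mul_apply]
    have hstep : (flip cs i * flip cs j) (w, ε) =
        ((s i * s j) * w * (s i * s j)⁻¹,
          ε * ((if w = s j then (-1 : ℤˣ) else 1) *
               (if w = s j * s i * s j then (-1 : ℤˣ) else 1))) := by
      rw [Equiv.Perm.mul_apply, flip_apply, flip_apply]
      simp only [Prod.mk.injEq]
      constructor
      · rw [mul_inv_rev, cs.inv_simple, cs.inv_simple]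
        group
      · rw [show (s j * w * s j = s i) = (w = s j * s i * s j) from propext (conj_eq_simple_iff cs i j w)]
        by_cases h1 : w = s j <;> by_cases h2 : w = s j * s i * s j <;>
          simp [h1, h2, mul_comm, mul_left_comm] <;>
          (try (split_ifs <;> simp))
    rw [hstep, ih]
    simp only [Prod.mk.injEq]
    constructor
    · rw [pow_succ, mul_inv_rev]
      group
    · rw [Finset.prod_range_succ']
      have harg : ∀ l : ℕ, (s i * s j) ^ l * ((s i * s j) * w * (s i * s j)⁻¹) * ((s i * s j) ^ l)⁻¹
          = (s i * s j) ^ (l + 1) * w * ((s i * s j) ^ (l + 1))⁻¹ := by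
        intro l
        rw [pow_succ, mul_inv_rev]
        group
      simp only [harg, pow_zero, one_mul, inv_one, mul_one]
      rw [mul_comm (∏ _x ∈ Finset.range k, _) _]
      rw [mul_assoc]


lemma swap_base (i j : B) : s j * (s j * s i) = (s j * s i)⁻¹ * s j := by
  have l1 : s j * (s j * s i) = s i := by
    rw [← mul_assoc, cs.simple_mul_simple_self, one_mul]
  have l2 : (s j * s i)⁻¹ * s j = s i := by
    rw [mul_inv_rev, cs.inv_simple, cs.inv_simple, mul_assoc, cs.simple_mul_simple_self, mul_one]
  rw [l1, l2]

lemma swapA (i j : B) (n : ℕ) : s j * (s j * s i) ^ n = ((s j * s i) ^ n)⁻¹ * s j := by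
  induction n with
  | zero => simp
  | succ n ih =>
    calc s j * (s j * s i) ^ (n+1)
        = (s j * (s j * s i) ^ n) * (s j * s i) := by rw [pow_succ, mul_assoc]
      _ = (((s j * s i) ^ n)⁻¹ * s j) * (s j * s i) := by rw [ih]
      _ = ((s j * s i) ^ n)⁻¹ * ((s j * s i)⁻¹ * s j) := by rw [mul_assoc, swap_base]
      _ = ((s j * s i) ^ (n+1))⁻¹ * s j := by
          conv_rhs => rw [pow_succ', mul_inv_rev, mul_assoc]

lemma swapB (i j : B) (n : ℕ) : s j * ((s j * s i) ^ n)⁻¹ = (s j * s i) ^ n * s j := by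
  have h := swapA cs i j n
  have : (s j * s i) ^ n * (s j * (s j * s i) ^ n) * ((s j * s i) ^ n)⁻¹
      = (s j * s i) ^ n * (((s j * s i) ^ n)⁻¹ * s j) * ((s j * s i) ^ n)⁻¹ := by rw [h]
  calc s j * ((s j * s i) ^ n)⁻¹
      = (s j * s i) ^ n * (((s j * s i) ^ n)⁻¹ * s j) * ((s j * s i) ^ n)⁻¹ := by group
    _ = (s j * s i) ^ n * (s j * (s j * s i) ^ n) * ((s j * s i) ^ n)⁻¹ := by rw [h]
    _ = (s j * s i) ^ n * s j := by group

lemma hinv_ij (i j : B) : (s i * s j)⁻¹ = s j * s i := by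
  rw [mul_inv_rev, cs.inv_simple, cs.inv_simple]

lemma pow_ij_inv (i j : B) (l : ℕ) : ((s i * s j) ^ l)⁻¹ = (s j * s i) ^ l := by
  rw [← inv_pow, hinv_ij]

lemma d_conj (i j : B) (l : ℕ) :
    ((s i * s j) ^ l)⁻¹ * s j * (s i * s j) ^ l = (s j * s i) ^ (2 * l) * s j := by
  have h1 : (s i * s j) ^ l = ((s j * s i) ^ l)⁻¹ :=
    inv_eq_iff_eq_inv.mp (pow_ij_inv cs i j l)
  rw [pow_ij_inv, h1, mul_assoc, swapB, show 2 * l = l + l by omega, pow_add]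
  group

lemma d_conj' (i j : B) (l : ℕ) :
    ((s i * s j) ^ l)⁻¹ * (s j * s i * s j) * (s i * s j) ^ l = (s j * s i) ^ (2 * l + 1) * s j := by
  have h1 : (s i * s j) ^ l = ((s j * s i) ^ l)⁻¹ :=
    inv_eq_iff_eq_inv.mp (pow_ij_inv cs i j l)
  rw [pow_ij_inv, h1]
  calc (s j * s i) ^ l * (s j * s i * s j) * ((s j * s i) ^ l)⁻¹
      = (s j * s i) ^ l * (s j * s i) * (s j * ((s j * s i) ^ l)⁻¹) := by group
    _ = (s j * s i) ^ l * (s j * s i) * ((s j * s i) ^ l * s j) := by rw [swapB]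
    _ = (s j * s i) ^ (2 * l + 1) * s j := by
        rw [show 2 * l + 1 = l + 1 + l by omega, pow_add, pow_succ]
        group

lemma flip_liftable : CoxeterMatrix.IsLiftable M (flip cs) := by
  intro i j
  set m := M i j with hm
  have hp : (s i * s j) ^ m = 1 := cs.simple_mul_simple_pow i j
  have hq : (s j * s i) ^ m = 1 := cs.simple_mul_simple_pow' i j
  apply Equiv.ext
  rintro ⟨w, ε⟩
  rw [flip_flip_pow_apply]
  have hfirst : (s i * s j) ^ m * w * ((s i * s j) ^ m)⁻¹ = w := by rw [hp]; group
  rw [hfirst]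
  have hcondrw : ∀ l : ℕ,
      (((if (s i * s j) ^ l * w * ((s i * s j) ^ l)⁻¹ = s j then (-1 : ℤˣ) else 1) *
        (if (s i * s j) ^ l * w * ((s i * s j) ^ l)⁻¹ = s j * s i * s j then (-1 : ℤˣ) else 1)))
      = ((if w = (s j * s i) ^ (2*l) * s j then (-1 : ℤˣ) else 1) *
         (if w = (s j * s i) ^ (2*l+1) * s j then (-1 : ℤˣ) else 1)) := by
    intro l
    have c1 : ((s i * s j) ^ l * w * ((s i * s j) ^ l)⁻¹ = s j) ↔ (w = (s j * s i) ^ (2*l) * s j) := by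
      constructor
      · intro h
        calc w = ((s i * s j) ^ l)⁻¹ * ((s i * s j) ^ l * w * ((s i * s j) ^ l)⁻¹) * (s i * s j) ^ l := by
              group
          _ = ((s i * s j) ^ l)⁻¹ * s j * (s i * s j) ^ l := by rw [h]
          _ = (s j * s i) ^ (2*l) * s j := d_conj cs i j l
      · intro h
        calc (s i * s j) ^ l * w * ((s i * s j) ^ l)⁻¹
            = (s i * s j) ^ l * ((s j * s i) ^ (2*l) * s j) * ((s i * s j) ^ l)⁻¹ := by rw [h]
          _ = (s i * s j) ^ l * (((s i * s j) ^ l)⁻¹ * s j * (s i * s j) ^ l) * ((s i * s j) ^ l)⁻¹ := by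
              rw [d_conj]
          _ = s j := by group
    have c2 : ((s i * s j) ^ l * w * ((s i * s j) ^ l)⁻¹ = s j * s i * s j) ↔
        (w = (s j * s i) ^ (2*l+1) * s j) := by
      constructor
      · intro h
        calc w = ((s i * s j) ^ l)⁻¹ * ((s i * s j) ^ l * w * ((s i * s j) ^ l)⁻¹) * (s i * s j) ^ l := by
              group
          _ = ((s i * s j) ^ l)⁻¹ * (s j * s i * s j) * (s i * s j) ^ l := by rw [h]
          _ = (s j * s i) ^ (2*l+1) * s j := d_conj' cs i j l
      · intro h
        calc (s i * s j) ^ l * w * ((s i * s j) ^ l)⁻¹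
            = (s i * s j) ^ l * ((s j * s i) ^ (2*l+1) * s j) * ((s i * s j) ^ l)⁻¹ := by rw [h]
          _ = (s i * s j) ^ l * (((s i * s j) ^ l)⁻¹ * (s j * s i * s j) * (s i * s j) ^ l) * ((s i * s j) ^ l)⁻¹ := by
              rw [d_conj']
          _ = s j * s i * s j := by group
    rw [show ((s i * s j) ^ l * w * ((s i * s j) ^ l)⁻¹ = s j) = (w = (s j * s i) ^ (2*l) * s j)
        from propext c1,
      show ((s i * s j) ^ l * w * ((s i * s j) ^ l)⁻¹ = s j * s i * s j)
          = (w = (s j * s i) ^ (2*l+1) * s j) from propext c2]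
  simp only [hcondrw]
  have hpair : ∀ n : ℕ, ∏ l ∈ Finset.range n,
      ((if w = (s j * s i) ^ (2*l) * s j then (-1 : ℤˣ) else 1) *
       (if w = (s j * s i) ^ (2*l+1) * s j then (-1 : ℤˣ) else 1))
      = ∏ l ∈ Finset.range (2*n), (if w = (s j * s i) ^ l * s j then (-1 : ℤˣ) else 1) := by
    intro n
    induction n with
    | zero => simp
    | succ n ihn =>
      rw [Finset.prod_range_succ, ihn, show 2*(n+1) = (2*n)+1+1 by omega,
        Finset.prod_range_succ, Finset.prod_range_succ, mul_assoc]
  rw [hpair]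
  have h2m : 2 * m = m + m := by omega
  rw [h2m, Finset.prod_range_add]
  have hper : ∀ l : ℕ, (s j * s i) ^ (m + l) * s j = (s j * s i) ^ l * s j := by
    intro l
    rw [pow_add, hq, one_mul]
  simp only [hper]
  rw [← Finset.prod_mul_distrib]
  have hsq : ∀ l : ℕ, ((if w = (s j * s i) ^ l * s j then (-1 : ℤˣ) else 1) *
      (if w = (s j * s i) ^ l * s j then (-1 : ℤˣ) else 1)) = 1 := by
    intro l; split_ifs <;> simp
  simp only [hsq, Finset.prod_const_one, mul_one]
  rfl

/-- The sign homomorphism. -/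
noncomputable def theta : W →* Equiv.Perm (W × ℤˣ) :=
  cs.lift ⟨flip cs, flip_liftable cs⟩

lemma theta_simple (i : B) : theta cs (s i) = flip cs i :=
  cs.lift_apply_simple (flip_liftable cs) i

lemma theta_wordProd (ω : List B) (w : W) (ε : ℤˣ) :
    theta cs (π ω) (w, ε) =
      (π ω * w * (π ω)⁻¹, ε * (-1 : ℤˣ) ^ (List.count w (ris ω))) := by
  induction ω generalizing w ε with
  | nil => simp [CoxeterSystem.wordProd_nil]
  | cons i ω ih =>
    rw [cs.wordProd_cons, map_mul, Equiv.Perm.mul_apply, ih, theta_simple, flip_apply]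
    have hris : ris (i :: ω) = ((π ω)⁻¹ * s i * (π ω)) :: ris ω := rfl
    rw [hris, List.count_cons]
    simp only [beq_iff_eq]
    simp only [Prod.mk.injEq]
    constructor
    · rw [mul_inv_rev, cs.inv_simple]
      group
    · have hcond : (π ω * w * (π ω)⁻¹ = s i) ↔ (w = (π ω)⁻¹ * s i * (π ω)) := by
        constructor
        · intro h
          calc w = (π ω)⁻¹ * (π ω * w * (π ω)⁻¹) * (π ω) := by group
            _ = (π ω)⁻¹ * s i * (π ω) := by rw [h]
        · intro h
          calc π ω * w * (π ω)⁻¹ = π ω * ((π ω)⁻¹ * s i * (π ω)) * (π ω)⁻¹ := by rw [h]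
            _ = s i := by group
      rw [show (π ω * w * (π ω)⁻¹ = s i) = (w = (π ω)⁻¹ * s i * (π ω)) from propext hcond]
      by_cases hw : w = (π ω)⁻¹ * s i * (π ω)
      · have h2 : (π ω)⁻¹ * s i * π ω = w := hw.symm
        rw [if_pos hw, if_pos h2, pow_succ]
        simp [mul_comm, mul_left_comm, mul_assoc]
      · have h2 : ¬ ((π ω)⁻¹ * s i * π ω = w) := fun h => hw h.symm
        rw [if_neg hw, if_neg h2]
        simp


/-- The sign of `w` under the action of `v`. -/
noncomputable def nn (v w : W) : ℤˣ := (theta cs v (w, 1)).2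

lemma theta_apply (v w : W) (ε : ℤˣ) :
    theta cs v (w, ε) = (v * w * v⁻¹, ε * nn cs v w) := by
  obtain ⟨ω, rfl⟩ := cs.wordProd_surjective v
  rw [theta_wordProd, nn, theta_wordProd, one_mul]

lemma nn_eq_count (ω : List B) (w : W) :
    nn cs (π ω) w = (-1 : ℤˣ) ^ (List.count w (ris ω)) := by
  rw [nn, theta_wordProd, one_mul]

lemma nn_mul (a b t : W) : nn cs (a * b) t = nn cs b t * nn cs a (b * t * b⁻¹) := by
  have h1 : theta cs (a * b) (t, 1) = theta cs a (theta cs b (t, 1)) := by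
    rw [map_mul]; rfl
  rw [theta_apply, theta_apply, theta_apply] at h1
  have := congrArg Prod.snd h1
  simpa [mul_comm, mul_left_comm] using this

lemma nn_one (t : W) : nn cs 1 t = 1 := by
  rw [nn, map_one]; rfl

lemma nn_simple (i : B) (w : W) :
    nn cs (s i) w = if w = s i then -1 else 1 := by
  rw [nn, theta_simple, flip_apply]

lemma nn_reflection_self {t : W} (ht : cs.IsReflection t) : nn cs t t = -1 := by
  obtain ⟨x, i, rfl⟩ := ht
  set t := x * s i * x⁻¹ with hts
  have key1 : nn cs ((x * s i) * x⁻¹) t = nn cs x⁻¹ t * nn cs (x * s i) (x⁻¹ * t * x⁻¹⁻¹) := nn_mul cs _ _ _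
  have e1 : x⁻¹ * t * x⁻¹⁻¹ = s i := by rw [hts]; group
  rw [e1] at key1
  have key2 : nn cs (x * s i) (s i) = nn cs (s i) (s i) * nn cs x (s i * s i * (s i)⁻¹) := nn_mul cs _ _ _
  have e2 : s i * s i * (s i)⁻¹ = s i := by
    rw [cs.simple_mul_simple_self, one_mul, cs.inv_simple]
  rw [e2, nn_simple, if_pos rfl] at key2
  have key3 : nn cs (x⁻¹ * x) (s i) = nn cs x (s i) * nn cs x⁻¹ (x * s i * x⁻¹) := nn_mul cs _ _ _
  rw [inv_mul_cancel, nn_one, ← hts] at key3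
  have hfin : nn cs t t = nn cs x⁻¹ t * (-1 * nn cs x (s i)) := by
    rw [← key2, ← key1]
  rw [hfin]
  have : nn cs x⁻¹ t * nn cs x (s i) = 1 := by
    rw [mul_comm]; exact key3.symm
  calc nn cs x⁻¹ t * (-1 * nn cs x (s i)) = -(nn cs x⁻¹ t * nn cs x (s i)) := by
        rw [neg_one_mul, mul_neg]
    _ = -1 := by rw [this]

lemma nn_neg_imp_inversion {v t : W} (ht : cs.IsReflection t) (h : nn cs v t = -1) :
    ℓ (v * t) < ℓ v := by
  obtain ⟨ω, hred, rfl⟩ := cs.exists_reduced_word' v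
  rw [nn_eq_count] at h
  have hcount : List.count t (ris ω) ≠ 0 := by
    intro h0
    rw [h0, pow_zero] at h
    exact absurd h (by decide)
  have hmem : t ∈ ris ω := List.count_pos_iff.mp (Nat.pos_of_ne_zero hcount)
  exact (cs.isRightInversion_of_mem_rightInvSeq hred hmem).2

lemma nn_neg_of_inversion {v t : W} (ht : cs.IsReflection t) (h : ℓ (v * t) < ℓ v) :
    nn cs v t = -1 := by
  have e : v = (v * t) * t := by
    rw [mul_assoc, ht.mul_self, mul_one]
  have key : nn cs ((v * t) * t) t = nn cs t t * nn cs (v * t) (t * t * t⁻¹) := nn_mul cs _ _ _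
  have e2 : t * t * t⁻¹ = t := by rw [ht.mul_self, one_mul, ht.inv]
  rw [e2, nn_reflection_self cs ht] at key
  have h2 : nn cs (v * t) t = 1 := by
    rcases Int.units_eq_one_or (nn cs (v * t) t) with h' | h'
    · exact h'
    · exfalso
      have := nn_neg_imp_inversion cs ht h'
      rw [mul_assoc, ht.mul_self, mul_one] at this
      omega
  rw [h2, mul_one] at key
  rw [e, key]

/-- Strong exchange, membership form. -/
lemma strong_exchange_mem {ω : List B} (hred : cs.IsReduced ω) {t : W} (ht : cs.IsReflection t)
    (h : ℓ (π ω * t) < ℓ (π ω)) : t ∈ ris ω := by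
  have := nn_neg_of_inversion cs ht h
  rw [nn_eq_count] at this
  by_contra hmem
  rw [List.count_eq_zero_of_not_mem hmem, pow_zero] at this
  exact absurd this (by decide)

/-- Strong exchange. -/
lemma strong_exchange {ω : List B} (hred : cs.IsReduced ω) {t : W} (ht : cs.IsReflection t)
    (h : ℓ (π ω * t) < ℓ (π ω)) :
    ∃ j < ω.length, π ω * t = π (ω.eraseIdx j) := by
  have hmem := strong_exchange_mem cs hred ht h
  obtain ⟨j, hj, hget⟩ := List.getElem_of_mem hmem
  rw [cs.length_rightInvSeq] at hj
  refine ⟨j, hj, ?_⟩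
  have hgetD : (ris ω).getD j 1 = t := by
    rw [List.getD_eq_getElem?_getD, List.getElem?_eq_getElem (by rwa [cs.length_rightInvSeq]),
      Option.getD_some, hget]
  rw [← hgetD]
  exact cs.wordProd_mul_getD_rightInvSeq ω j


local infix:50 " ≼ " => BruhatLE cs

lemma edge_le {u v : W} (h : BruhatEdge cs u v) : u ≼ v := Relation.ReflTransGen.single h

lemma le_rfl' (u : W) : u ≼ u := Relation.ReflTransGen.refl

lemma le_trans' {u v w : W} (h1 : u ≼ v) (h2 : v ≼ w) : u ≼ w := h1.trans h2

lemma length_lt_of_edge {u v : W} (h : BruhatEdge cs u v) : ℓ u < ℓ v := by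
  obtain ⟨t, _, _, hlen⟩ := h
  exact hlen

lemma length_le_of_le {u v : W} (h : u ≼ v) : ℓ u ≤ ℓ v := by
  induction h with
  | refl => exact le_rfl
  | tail hab hbc ih => exact ih.trans (length_lt_of_edge cs hbc).le

lemma eq_of_le_of_length_ge {u v : W} (h : u ≼ v) (hl : ℓ v ≤ ℓ u) : u = v := by
  rcases Relation.ReflTransGen.cases_tail h with rfl | ⟨c, hac, hcb⟩
  · rfl
  · exfalso
    have h1 := length_le_of_le cs hac
    have h2 := length_lt_of_edge cs hcb
    omega

lemma le_one_iff {u : W} (h : u ≼ 1) : u = 1 := by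
  apply eq_of_le_of_length_ge cs h
  simp

lemma edge_up {u : W} {i : B} (h : ¬ cs.IsRightDescent u i) : BruhatEdge cs u (u * s i) := by
  refine ⟨s i, cs.isReflection_simple i, rfl, ?_⟩
  have := cs.length_mul_simple_ne u i
  unfold CoxeterSystem.IsRightDescent at h
  omega

lemma edge_down {u : W} {i : B} (h : cs.IsRightDescent u i) : BruhatEdge cs (u * s i) u := by
  refine ⟨s i, cs.isReflection_simple i, ?_, h⟩
  rw [cs.simple_mul_simple_cancel_right]

lemma length_succ_of_not_descent {u : W} {i : B} (h : ¬ cs.IsRightDescent u i) :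
    ℓ (u * s i) = ℓ u + 1 := by
  have := cs.length_mul_simple u i
  unfold CoxeterSystem.IsRightDescent at h
  omega

lemma length_pred_of_descent {u : W} {i : B} (h : cs.IsRightDescent u i) :
    ℓ (u * s i) + 1 = ℓ u := by
  have := cs.length_mul_simple u i
  unfold CoxeterSystem.IsRightDescent at h
  omega

/-- The lifting property and the ascent-lifting property, by mutual induction. -/
lemma L1A : ∀ n : ℕ, ∀ v : W, ℓ v ≤ n →
    (∀ i, cs.IsRightDescent v i → ∀ u, u ≼ v → u * s i ≼ v) ∧
    (∀ i, ¬ cs.IsRightDescent v i → ∀ u, ¬ cs.IsRightDescent u i → u ≼ v → u * s i ≼ v * s i) := by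
  intro n
  induction n using Nat.strong_induction_on with
  | _ n IH =>
  intro v hv
  constructor
  · -- L1
    intro i hdv u huv
    by_cases hdu : cs.IsRightDescent u i
    · -- trivial: u * s i ⋖ u ≤ v
      exact le_trans' cs (edge_le cs (edge_down cs hdu)) huv
    · -- main case
      rcases Relation.ReflTransGen.cases_tail huv with rfl | ⟨w, huw, hedge⟩
      · exact absurd hdv hdu
      obtain ⟨t, ht, hvwt, hlwv⟩ := hedge
      have hw_eq : w = v * t := by
        rw [hvwt, mul_assoc, ht.mul_self, mul_one]
      -- reduced word for v ending in i
      obtain ⟨κ, hκred, hκprod⟩ := cs.exists_reduced_word' (v * s i)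
      have hvlen : ℓ (v * s i) + 1 = ℓ v := length_pred_of_descent cs hdv
      set ω : List B := κ ++ [i] with hω
      have hωprod : π ω = v := by
        rw [hω, cs.wordProd_append, cs.wordProd_singleton, ← hκprod,
          cs.simple_mul_simple_cancel_right]
      have hωred : cs.IsReduced ω := by
        unfold CoxeterSystem.IsReduced
        rw [hωprod, hω, List.length_append, List.length_singleton]
        unfold CoxeterSystem.IsReduced at hκred
        rw [← hκprod] at hκred
        omega
      have hinv : ℓ (π ω * t) < ℓ (π ω) := by
        rw [hωprod, ← hw_eq]
        exact hlwv
      obtain ⟨j, hj, hEq⟩ := strong_exchange cs hωred ht hinv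
      rw [hωprod, ← hw_eq] at hEq
      have hjlen : j ≤ κ.length := by
        rw [hω, List.length_append, List.length_singleton] at hj
        omega
      have hκlen : κ.length = ℓ (v * s i) := by
        unfold CoxeterSystem.IsReduced at hκred
        rw [← hκprod] at hκred
        omega
      -- the key: u ≼ v * s i in all remaining cases, then apply A at v * s i
      have hfinish : u ≼ v * s i → u * s i ≼ v := by
        intro hu'
        have hndv' : ¬ cs.IsRightDescent (v * s i) i := by
          unfold CoxeterSystem.IsRightDescent
          rw [cs.simple_mul_simple_cancel_right]
          omega
        have hA := (IH (ℓ (v * s i)) (by omega) (v * s i) le_rfl).2 i hndv' u hdu hu'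
        rwa [cs.simple_mul_simple_cancel_right] at hA
      rcases Nat.lt_or_ge j κ.length with hjκ | hjκ
      · -- j < κ.length
        have herase : ω.eraseIdx j = κ.eraseIdx j ++ [i] := by
          rw [hω, List.eraseIdx_append_of_lt_length hjκ]
        set x := π (κ.eraseIdx j) with hx
        have hwx : w = x * s i := by
          rw [hEq, herase, cs.wordProd_append, cs.wordProd_singleton]
        set t' := (cs.rightInvSeq κ).getD j 1 with ht'
        have hxt' : π κ * t' = x := cs.wordProd_mul_getD_rightInvSeq κ j
        have ht'mem : t' ∈ cs.rightInvSeq κ := by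
          rw [ht']
          have hjr : j < (cs.rightInvSeq κ).length := by
            rw [cs.length_rightInvSeq]; exact hjκ
          rw [List.getD_eq_getElem?_getD, List.getElem?_eq_getElem hjr, Option.getD_some]
          exact List.getElem_mem _
        have ht'refl : cs.IsReflection t' := cs.isReflection_of_mem_rightInvSeq κ ht'mem
        have hxlen : ℓ x ≤ κ.length - 1 := by
          have h1 := cs.length_wordProd_le (κ.eraseIdx j)
          have h2 : (κ.eraseIdx j).length + 1 = κ.length := List.length_eraseIdx_add_one hjκ
          rw [← hx] at h1
          omega
        have hxv' : x ≼ v * s i := by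
          apply edge_le
          refine ⟨t', ht'refl, ?_, ?_⟩
          · rw [← hxt', ← hκprod, mul_assoc, ht'refl.mul_self, mul_one]
          · omega
        by_cases hdw : cs.IsRightDescent w i
        · -- use L1 at w
          have hL1w := (IH (ℓ w) (by omega) w le_rfl).1 i hdw u huw
          exact le_trans' cs hL1w (edge_le cs ⟨t, ht, hvwt, hlwv⟩)
        · -- w ≤ w * s i = x ≤ v * s i
          have hwup : w ≼ x := by
            rw [hwx] at hdw ⊢
            have : ¬ cs.IsRightDescent (x * s i) i → BruhatEdge cs (x * s i) (x * s i * s i) :=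
              edge_up cs
            have h2 := this hdw
            rw [cs.simple_mul_simple_cancel_right] at h2
            exact edge_le cs h2
          exact hfinish (le_trans' cs huw (le_trans' cs hwup hxv'))
      · -- j = κ.length, so w = v * s i
        have hjeq : j = κ.length := by omega
        have herase : ω.eraseIdx j = κ := by
          rw [hω, hjeq, List.eraseIdx_append_of_length_le (le_refl κ.length), Nat.sub_self]
          simp
        have hwvs : w = v * s i := by rw [hEq, herase, ← hκprod]
        exact hfinish (hwvs ▸ huw)
  · -- A
    intro i hdv u hdu huv
    rcases Relation.ReflTransGen.cases_tail huv with rfl | ⟨w, huw, hedge⟩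
    · exact le_rfl' cs _
    obtain ⟨t, ht, hvwt, hlwv⟩ := hedge
    by_cases hdw : cs.IsRightDescent w i
    · -- L1 at w, then w ≤ v ≤ v * s i
      have hL1w := (IH (ℓ w) (by omega) w le_rfl).1 i hdw u huw
      refine le_trans' cs hL1w (le_trans' cs (edge_le cs ⟨t, ht, hvwt, hlwv⟩)
        (edge_le cs (edge_up cs hdv)))
    · -- A at w, then edge (w * s i) (v * s i)
      have hAw := (IH (ℓ w) (by omega) w le_rfl).2 i hdw u hdu huw
      refine le_trans' cs hAw (edge_le cs ?_)
      refine ⟨s i * t * s i, ?_, ?_, ?_⟩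
      · have := ht.conj (s i)
        rwa [cs.inv_simple] at this
      · rw [hvwt]
        rw [show w * s i * (s i * t * s i) = w * (s i * s i) * t * s i by group,
          cs.simple_mul_simple_self, mul_one]
      · have h1 : ℓ (w * s i) = ℓ w + 1 := length_succ_of_not_descent cs hdw
        have h2 : ℓ (v * s i) = ℓ v + 1 := length_succ_of_not_descent cs hdv
        omega


lemma bruhat_L1 {i : B} {u v : W} (hdv : cs.IsRightDescent v i) (h : u ≼ v) : u * s i ≼ v :=
  (L1A cs (ℓ v) v le_rfl).1 i hdv u h

lemma bruhat_A {i : B} {u v : W} (hdv : ¬ cs.IsRightDescent v i) (hdu : ¬ cs.IsRightDescent u i)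
    (h : u ≼ v) : u * s i ≼ v * s i :=
  (L1A cs (ℓ v) v le_rfl).2 i hdv u hdu h

lemma exists_reduced_sublist (ω : List B) :
    ∃ μ, μ.Sublist ω ∧ cs.IsReduced μ ∧ π μ = π ω := by
  induction ω using List.reverseRecOn with
  | nil => exact ⟨[], List.Sublist.refl _, by simp [CoxeterSystem.IsReduced], rfl⟩
  | append_singleton κ i ihκ =>
    obtain ⟨ν, hsub, hred, hprod⟩ := ihκ
    by_cases hc : ℓ (π ν * s i) < ℓ (π ν)
    · obtain ⟨j, hj, hEq⟩ := strong_exchange cs hred (cs.isReflection_simple i) hc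
      refine ⟨ν.eraseIdx j, ?_, ?_, ?_⟩
      · exact (List.eraseIdx_sublist ν j).trans (hsub.trans (List.sublist_append_left κ [i]))
      · unfold CoxeterSystem.IsReduced at hred ⊢
        rw [← hEq]
        have h1 : (ν.eraseIdx j).length + 1 = ν.length := List.length_eraseIdx_add_one hj
        have h2 : ℓ (π ν * s i) + 1 = ℓ (π ν) := by
          have := cs.length_mul_simple (π ν) i
          omega
        omega
      · rw [← hEq, cs.wordProd_append, cs.wordProd_singleton, hprod]
    · have h2 : ℓ (π ν * s i) = ℓ (π ν) + 1 := by
        have := cs.length_mul_simple (π ν) i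
        have := cs.length_mul_simple_ne (π ν) i
        omega
      refine ⟨ν ++ [i], hsub.append (List.Sublist.refl [i]), ?_, ?_⟩
      · unfold CoxeterSystem.IsReduced at hred ⊢
        rw [cs.wordProd_append, cs.wordProd_singleton, List.length_append,
          List.length_singleton, h2, hred]
      · rw [cs.wordProd_append, cs.wordProd_append, hprod]

lemma le_imp_sublist {u v : W} (h : u ≼ v) :
    ∀ ω, cs.IsReduced ω → π ω = v → ∃ μ, μ.Sublist ω ∧ cs.IsReduced μ ∧ π μ = u := by
  induction h with
  | refl => exact fun ω hred hprod => ⟨ω, List.Sublist.refl _, hred, hprod⟩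
  | @tail b c hab hbc ih =>
    intro ω hred hprod
    obtain ⟨t, ht, hc, hlen⟩ := hbc
    have hb : b = π ω * t := by
      rw [hprod, hc, mul_assoc, ht.mul_self, mul_one]
    have hlt : ℓ (π ω * t) < ℓ (π ω) := by
      rw [← hb, hprod]
      exact hc ▸ hlen
    obtain ⟨j, hj, hEq⟩ := strong_exchange cs hred ht hlt
    obtain ⟨μ', hsub', hred', hprod'⟩ := exists_reduced_sublist cs (ω.eraseIdx j)
    obtain ⟨μ, hsubμ, hredμ, hprodμ⟩ := ih μ' hred' (by rw [hprod', ← hEq, ← hb])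
    exact ⟨μ, hsubμ.trans (hsub'.trans (List.eraseIdx_sublist ω j)), hredμ, hprodμ⟩

lemma finite_le (v : W) : {w : W | w ≼ v}.Finite := by
  obtain ⟨ω, hred, hprod⟩ := cs.exists_reduced_word' v
  apply Set.Finite.subset (List.toFinset (ω.sublists.map cs.wordProd)).finite_toSet
  intro w hw
  obtain ⟨μ, hsub, _, hprodμ⟩ := le_imp_sublist cs hw ω hred hprod.symm
  simp only [Finset.coe_sort_coe, List.coe_toFinset, Set.mem_setOf_eq, List.mem_map,
    List.mem_sublists]
  exact ⟨μ, hsub, hprodμ⟩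


section RtLemmas

variable (Rt : W → W → Polynomial ℤ)

lemma id1 (hRt0 : ∀ u v, ¬ BruhatLE cs u v → Rt u v = 0)
    (hRt1 : ∀ u, Rt u u = 1)
    (hRt2 : ∀ u v i, BruhatLE cs u v → u ≠ v → cs.IsRightDescent v i →
      (cs.IsRightDescent u i → Rt u v = Rt (u * cs.simple i) (v * cs.simple i)) ∧
      (¬ cs.IsRightDescent u i →
        Rt u v = Rt (u * cs.simple i) (v * cs.simple i) + X * Rt u (v * cs.simple i)))
    {v : W} {i : B} (hdv : cs.IsRightDescent v i) (w : W) :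
    Rt w v = Rt (w * s i) (v * s i) + (if cs.IsRightDescent w i then 0 else X * Rt w (v * s i)) := by
  by_cases hwv : BruhatLE cs w v
  · by_cases hweq : w = v
    · subst hweq
      rw [hRt1, hRt1, if_pos hdv, add_zero]
    · have h2 := hRt2 w v i hwv hweq hdv
      by_cases hdw : cs.IsRightDescent w i
      · rw [h2.1 hdw, if_pos hdw, add_zero]
      · rw [h2.2 hdw, if_neg hdw]
  · have h0 : Rt w v = 0 := hRt0 _ _ hwv
    have h1 : Rt (w * s i) (v * s i) = 0 := by
      apply hRt0
      intro hle
      apply hwv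
      have h3 : BruhatLE cs (w * s i) v := le_trans' cs hle (edge_le cs (edge_down cs hdv))
      have h4 := bruhat_L1 cs hdv h3
      rwa [cs.simple_mul_simple_cancel_right] at h4
    have h4 : Rt w (v * s i) = 0 := by
      apply hRt0
      intro hle
      exact hwv (le_trans' cs hle (edge_le cs (edge_down cs hdv)))
    rw [h0, h1, h4]
    split_ifs <;> simp

lemma id2 (hRt0 : ∀ u v, ¬ BruhatLE cs u v → Rt u v = 0)
    (hRt1 : ∀ u, Rt u u = 1)
    (hRt2 : ∀ u v i, BruhatLE cs u v → u ≠ v → cs.IsRightDescent v i →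
      (cs.IsRightDescent u i → Rt u v = Rt (u * cs.simple i) (v * cs.simple i)) ∧
      (¬ cs.IsRightDescent u i →
        Rt u v = Rt (u * cs.simple i) (v * cs.simple i) + X * Rt u (v * cs.simple i)))
    (u : W) (i : B) (w : W) :
    Rt u (w * s i) + (if cs.IsRightDescent u i then X * Rt u w else 0)
      = Rt (u * s i) w + (if cs.IsRightDescent w i then 0 else X * Rt u w) := by
  by_cases hdw : cs.IsRightDescent w i <;> by_cases hdu : cs.IsRightDescent u i
  · -- Case D : desc w, desc u
    rw [if_pos hdw, if_pos hdu, add_zero]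
    by_cases hle : BruhatLE cs (u * s i) w
    · have hu_le_w : BruhatLE cs u w := by
        have := bruhat_L1 cs hdw hle
        rwa [cs.simple_mul_simple_cancel_right] at this
      by_cases heq : u * s i = w
      · have hws : w * s i = u := by rw [← heq, cs.simple_mul_simple_cancel_right]
        have hzero : Rt u w = 0 := by
          apply hRt0
          intro hle2
          have h5 := length_le_of_le cs hle2
          have h6 : ℓ (u * s i) + 1 = ℓ u := length_pred_of_descent cs hdu
          rw [← heq] at h5
          omega
        rw [hws, hzero, hRt1, ← heq, hRt1, mul_zero, add_zero]
      · have hdus : ¬ cs.IsRightDescent (u * s i) i := by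
          unfold CoxeterSystem.IsRightDescent
          rw [cs.simple_mul_simple_cancel_right]
          have := length_pred_of_descent cs hdu
          omega
        have h2 := (hRt2 (u * s i) w i hle heq hdw).2 hdus
        rw [cs.simple_mul_simple_cancel_right] at h2
        have h3 : Rt u w = Rt (u * s i) (w * s i) := by
          by_cases hne : u = w
          · subst hne
            rw [hRt1, hRt1]
          · exact (hRt2 u w i hu_le_w hne hdw).1 hdu
        rw [h2, h3]
    · have h0 : Rt (u * s i) w = 0 := hRt0 _ _ hle
      have h1 : Rt u (w * s i) = 0 := by
        apply hRt0
        intro hle2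
        apply hle
        exact le_trans' cs (edge_le cs (edge_down cs hdu))
          (le_trans' cs hle2 (edge_le cs (edge_down cs hdw)))
      have h3 : Rt u w = 0 := by
        apply hRt0
        intro hle2
        exact hle (bruhat_L1 cs hdw hle2)
      rw [h0, h1, h3, mul_zero, add_zero]
  · -- Case B : desc w, not desc u
    rw [if_pos hdw, if_neg hdu, add_zero, add_zero]
    by_cases hle : BruhatLE cs (u * s i) w
    · by_cases heq : u * s i = w
      · have hws : w * s i = u := by rw [← heq, cs.simple_mul_simple_cancel_right]
        rw [hws, hRt1, ← heq, hRt1]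
      · have hdus : cs.IsRightDescent (u * s i) i := by
          unfold CoxeterSystem.IsRightDescent
          rw [cs.simple_mul_simple_cancel_right]
          have := length_succ_of_not_descent cs hdu
          omega
        have h2 := (hRt2 (u * s i) w i hle heq hdw).1 hdus
        rw [cs.simple_mul_simple_cancel_right] at h2
        rw [h2]
    · have h0 : Rt (u * s i) w = 0 := hRt0 _ _ hle
      have h1 : Rt u (w * s i) = 0 := by
        apply hRt0
        intro hle2
        apply hle
        have h3 : BruhatLE cs u w := le_trans' cs hle2 (edge_le cs (edge_down cs hdw))
        exact bruhat_L1 cs hdw h3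
      rw [h0, h1]
  · -- Case C : not desc w, desc u
    rw [if_neg hdw, if_pos hdu]
    have hdws : cs.IsRightDescent (w * s i) i := by
      unfold CoxeterSystem.IsRightDescent
      rw [cs.simple_mul_simple_cancel_right]
      have := length_succ_of_not_descent cs hdw
      omega
    have hkey : Rt u (w * s i) = Rt (u * s i) w := by
      by_cases hle : BruhatLE cs u (w * s i)
      · by_cases heq : u = w * s i
        · have hus : u * s i = w := by rw [heq, cs.simple_mul_simple_cancel_right]
          rw [← heq, hRt1, hus, hRt1]
        · have h2 := (hRt2 u (w * s i) i hle heq hdws).1 hdu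
          rwa [cs.simple_mul_simple_cancel_right] at h2
      · have h0 : Rt u (w * s i) = 0 := hRt0 _ _ hle
        have h1 : Rt (u * s i) w = 0 := by
          apply hRt0
          intro hle2
          apply hle
          have hdus : ¬ cs.IsRightDescent (u * s i) i := by
            unfold CoxeterSystem.IsRightDescent
            rw [cs.simple_mul_simple_cancel_right]
            have := length_pred_of_descent cs hdu
            omega
          have h3 := bruhat_A cs hdw hdus hle2
          rwa [cs.simple_mul_simple_cancel_right] at h3
        rw [h0, h1]
    rw [hkey]
  · -- Case A : not desc w, not desc u
    rw [if_neg hdw, if_neg hdu, add_zero]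
    have hdws : cs.IsRightDescent (w * s i) i := by
      unfold CoxeterSystem.IsRightDescent
      rw [cs.simple_mul_simple_cancel_right]
      have := length_succ_of_not_descent cs hdw
      omega
    by_cases hle : BruhatLE cs u (w * s i)
    · by_cases heq : u = w * s i
      · exfalso
        apply hdu
        rw [heq]
        exact hdws
      · have h2 := (hRt2 u (w * s i) i hle heq hdws).2 hdu
        rwa [cs.simple_mul_simple_cancel_right] at h2
    · have h0 : Rt u (w * s i) = 0 := hRt0 _ _ hle
      have h1 : Rt (u * s i) w = 0 := by
        apply hRt0
        intro hle2
        apply hle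
        have h3 : BruhatLE cs u (u * s i) := edge_le cs (edge_up cs hdu)
        have h4 : BruhatLE cs w (w * s i) := edge_le cs (edge_up cs hdw)
        exact le_trans' cs h3 (le_trans' cs hle2 h4)
      have h3 : Rt u w = 0 := by
        apply hRt0
        intro hle2
        apply hle
        exact le_trans' cs hle2 (edge_le cs (edge_up cs hdw))
      rw [h0, h1, h3, mul_zero, add_zero]

lemma neg_pow_mul_simple (w : W) (i : B) :
    (-1 : Polynomial ℤ) ^ (ℓ (w * s i)) = -(-1 : Polynomial ℤ) ^ (ℓ w) := by
  rcases cs.length_mul_simple w i with h | h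
  · rw [h, pow_succ]
    ring
  · rw [← h, pow_succ]
    ring

end RtLemmas


section KeyLemma

lemma key (Rt : W → W → Polynomial ℤ)
    (hRt0 : ∀ u v, ¬ BruhatLE cs u v → Rt u v = 0)
    (hRt1 : ∀ u, Rt u u = 1)
    (hRt2 : ∀ u v i, BruhatLE cs u v → u ≠ v → cs.IsRightDescent v i →
      (cs.IsRightDescent u i → Rt u v = Rt (u * cs.simple i) (v * cs.simple i)) ∧
      (¬ cs.IsRightDescent u i →
        Rt u v = Rt (u * cs.simple i) (v * cs.simple i) + X * Rt u (v * cs.simple i))) :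
    ∀ n : ℕ, ∀ v : W, ℓ v = n → ∀ u : W,
    ∑ w ∈ (finite_le cs v).toFinset, (-1 : Polynomial ℤ) ^ (ℓ w) * Rt u w * Rt w v
      = if u = v then (-1 : Polynomial ℤ) ^ (ℓ u) else 0 := by
  intro n
  induction n using Nat.strong_induction_on with
  | _ n IH =>
  intro v hn u
  by_cases hv1 : v = 1
  · -- base case
    subst hv1
    have hsum : ∑ w ∈ (finite_le cs 1).toFinset, (-1 : Polynomial ℤ) ^ (ℓ w) * Rt u w * Rt w 1
        = (-1 : Polynomial ℤ) ^ (ℓ (1 : W)) * Rt u 1 * Rt 1 1 := by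
      apply Finset.sum_eq_single
      · intro w hw hne
        exact absurd (le_one_iff cs ((finite_le cs 1).mem_toFinset.mp hw)) hne
      · intro h1
        exact absurd ((finite_le cs 1).mem_toFinset.mpr (le_rfl' cs 1)) h1
    rw [hsum, hRt1, mul_one, cs.length_one, pow_zero, one_mul]
    by_cases hu1 : u = 1
    · subst hu1
      rw [if_pos rfl, hRt1, cs.length_one, pow_zero]
    · rw [if_neg hu1, hRt0 u 1 (fun h => hu1 (le_one_iff cs h))]
  · -- inductive step
    obtain ⟨i, hdv⟩ := cs.exists_rightDescent_of_ne_one hv1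
    have hlv' : ℓ (v * s i) + 1 = ℓ v := length_pred_of_descent cs hdv
    set T : Finset W := (finite_le cs v).toFinset with hT
    set T' : Finset W := (finite_le cs (v * s i)).toFinset with hT'
    set E : Finset W := T ∪ T.image (· * s i) with hE
    have hmemT : ∀ w, w ∈ T ↔ BruhatLE cs w v := fun w => (finite_le cs v).mem_toFinset
    have hmemT' : ∀ w, w ∈ T' ↔ BruhatLE cs w (v * s i) :=
      fun w => (finite_le cs (v * s i)).mem_toFinset
    have hmemE : ∀ w, w ∈ E ↔ (BruhatLE cs w v ∨ BruhatLE cs (w * s i) v) := by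
      intro w
      rw [hE, Finset.mem_union, Finset.mem_image, hmemT]
      constructor
      · rintro (h | ⟨a, ha, rfl⟩)
        · exact Or.inl h
        · right
          rw [cs.simple_mul_simple_cancel_right]
          exact (hmemT a).mp ha
      · rintro (h | h)
        · exact Or.inl h
        · right
          exact ⟨w * s i, (hmemT _).mpr h, by rw [cs.simple_mul_simple_cancel_right]⟩
    have hEinv : ∀ w ∈ E, w * s i ∈ E := by
      intro w hw
      rw [hmemE] at hw ⊢
      rcases hw with h | h
      · exact Or.inr (by rwa [cs.simple_mul_simple_cancel_right])
      · exact Or.inl h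
    have hTsubE : T ⊆ E := Finset.subset_union_left
    have hT'subE : T' ⊆ E := by
      intro w hw
      rw [hmemE]
      left
      exact le_trans' cs ((hmemT' w).mp hw) (edge_le cs (edge_down cs hdv))
    -- Step 1: extend the sum to E
    have step1 : ∑ w ∈ T, (-1 : Polynomial ℤ) ^ (ℓ w) * Rt u w * Rt w v
        = ∑ w ∈ E, (-1 : Polynomial ℤ) ^ (ℓ w) * Rt u w * Rt w v := by
      apply Finset.sum_subset hTsubE
      intro w _ hwT
      rw [hRt0 w v (fun h => hwT ((hmemT w).mpr h)), mul_zero]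
    -- Step 2: apply id1 pointwise
    have hsplit : ∀ w, (-1 : Polynomial ℤ) ^ (ℓ w) * Rt u w * Rt w v
        = (-1 : Polynomial ℤ) ^ (ℓ w) * Rt u w * Rt (w * s i) (v * s i)
          + (if cs.IsRightDescent w i then 0
             else (-1 : Polynomial ℤ) ^ (ℓ w) * (X * (Rt u w * Rt w (v * s i)))) := by
      intro w
      rw [id1 cs Rt hRt0 hRt1 hRt2 hdv w]
      by_cases hdw : cs.IsRightDescent w i
      · rw [if_pos hdw, if_pos hdw, add_zero, add_zero]
      · rw [if_neg hdw, if_neg hdw]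
        ring
    have step2 : ∑ w ∈ E, (-1 : Polynomial ℤ) ^ (ℓ w) * Rt u w * Rt w v
        = ∑ w ∈ E, (-1 : Polynomial ℤ) ^ (ℓ w) * Rt u w * Rt (w * s i) (v * s i)
          + ∑ w ∈ E, (if cs.IsRightDescent w i then 0
             else (-1 : Polynomial ℤ) ^ (ℓ w) * (X * (Rt u w * Rt w (v * s i)))) := by
      rw [← Finset.sum_add_distrib]
      exact Finset.sum_congr rfl (fun w _ => hsplit w)
    -- Step 3: reindex the first sum by w ↦ w * s i
    have step3 : ∑ w ∈ E, (-1 : Polynomial ℤ) ^ (ℓ w) * Rt u w * Rt (w * s i) (v * s i)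
        = ∑ w ∈ E, (-1 : Polynomial ℤ) ^ (ℓ (w * s i)) * Rt u (w * s i) * Rt w (v * s i) := by
      apply Finset.sum_nbij' (i := fun w => w * s i) (j := fun w => w * s i)
      · exact fun a ha => hEinv a ha
      · exact fun a ha => hEinv a ha
      · intro a _
        rw [cs.simple_mul_simple_cancel_right]
      · intro a _
        rw [cs.simple_mul_simple_cancel_right]
      · intro a _
        rw [cs.simple_mul_simple_cancel_right]
    -- Step 4: pointwise main identity
    have hmain : ∀ w, (-1 : Polynomial ℤ) ^ (ℓ (w * s i)) * Rt u (w * s i) * Rt w (v * s i)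
          + (if cs.IsRightDescent w i then 0
             else (-1 : Polynomial ℤ) ^ (ℓ w) * (X * (Rt u w * Rt w (v * s i))))
        = -((-1 : Polynomial ℤ) ^ (ℓ w) * Rt (u * s i) w * Rt w (v * s i))
          + (if cs.IsRightDescent u i
             then (-1 : Polynomial ℤ) ^ (ℓ w) * (X * (Rt u w * Rt w (v * s i))) else 0) := by
      intro w
      have hsign := neg_pow_mul_simple cs w i
      have h2 := id2 cs Rt hRt0 hRt1 hRt2 u i w
      rw [hsign]
      by_cases hdw : cs.IsRightDescent w i <;> by_cases hdu : cs.IsRightDescent u i <;>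
        simp only [hdw, hdu, if_true, if_false] at h2 ⊢ <;>
        linear_combination (-((-1 : Polynomial ℤ) ^ (ℓ w)) * Rt w (v * s i)) * h2
    have step4 : ∑ w ∈ E, (-1 : Polynomial ℤ) ^ (ℓ (w * s i)) * Rt u (w * s i) * Rt w (v * s i)
          + ∑ w ∈ E, (if cs.IsRightDescent w i then 0
             else (-1 : Polynomial ℤ) ^ (ℓ w) * (X * (Rt u w * Rt w (v * s i))))
        = -(∑ w ∈ E, (-1 : Polynomial ℤ) ^ (ℓ w) * Rt (u * s i) w * Rt w (v * s i))
          + ∑ w ∈ E, (if cs.IsRightDescent u i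
             then (-1 : Polynomial ℤ) ^ (ℓ w) * (X * (Rt u w * Rt w (v * s i))) else 0) := by
      rw [← Finset.sum_add_distrib, ← Finset.sum_neg_distrib, ← Finset.sum_add_distrib]
      exact Finset.sum_congr rfl (fun w _ => hmain w)
    -- Step 5: shrink sums from E to T'
    have hshrink : ∀ a : W, ∑ w ∈ E, (-1 : Polynomial ℤ) ^ (ℓ w) * Rt a w * Rt w (v * s i)
        = ∑ w ∈ T', (-1 : Polynomial ℤ) ^ (ℓ w) * Rt a w * Rt w (v * s i) := by
      intro a
      symm
      apply Finset.sum_subset hT'subE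
      intro w _ hwT'
      rw [hRt0 w (v * s i) (fun h => hwT' ((hmemT' w).mpr h)), mul_zero]
    have hIH : ∀ a : W, ∑ w ∈ T', (-1 : Polynomial ℤ) ^ (ℓ w) * Rt a w * Rt w (v * s i)
        = if a = v * s i then (-1 : Polynomial ℤ) ^ (ℓ a) else 0 :=
      fun a => IH (ℓ (v * s i)) (by omega) (v * s i) rfl a
    -- Put everything together
    rw [step1, step2, step3, step4, hshrink, hIH]
    have hsecond : ∑ w ∈ E, (if cs.IsRightDescent u i
          then (-1 : Polynomial ℤ) ^ (ℓ w) * (X * (Rt u w * Rt w (v * s i))) else 0)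
        = if cs.IsRightDescent u i
          then X * (if u = v * s i then (-1 : Polynomial ℤ) ^ (ℓ u) else 0) else 0 := by
      by_cases hdu : cs.IsRightDescent u i
      · rw [if_pos hdu]
        simp only [if_pos hdu]
        have hcomm : ∀ w : W, ((-1 : Polynomial ℤ) ^ (ℓ w) * (X * (Rt u w * Rt w (v * s i))))
            = X * ((-1 : Polynomial ℤ) ^ (ℓ w) * Rt u w * Rt w (v * s i)) := fun w => by ring
        simp only [hcomm]
        rw [← Finset.mul_sum, hshrink u, hIH u]
      · simp only [if_neg hdu]
        simp
    rw [hsecond]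
    -- final arithmetic
    by_cases huv : u = v
    · subst huv
      have hne : u ≠ u * s i := by
        intro h
        have : ℓ u = ℓ (u * s i) := by rw [← h]
        omega
      rw [if_pos rfl, if_pos rfl, if_pos hdv, if_neg hne, mul_zero, add_zero]
      have hsign := neg_pow_mul_simple cs u i
      rw [hsign]
      ring
    · rw [if_neg huv]
      have hne1 : u * s i ≠ v * s i := by
        intro h
        apply huv
        have := congrArg (· * s i) h
        simpa only [cs.simple_mul_simple_cancel_right] using this
      rw [if_neg hne1, neg_zero, zero_add]
      by_cases hdu : cs.IsRightDescent u i
      · rw [if_pos hdu]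
        have hne2 : u ≠ v * s i := by
          intro h
          have h3 : ℓ (u * s i) < ℓ u := hdu
          have h2 : u * s i = v := by rw [h, cs.simple_mul_simple_cancel_right]
          rw [h2, h] at h3
          omega
        rw [if_neg hne2, mul_zero]
      · rw [if_neg hdu]

end KeyLemma

end InvAux

open Classical in
/-- The inversion formula for the `R̃`-polynomials. -/
theorem inversion_formula_Rt (cs : CoxeterSystem M W) (Rt : W → W → Polynomial ℤ)
    (hRt0 : ∀ u v, ¬ BruhatLE cs u v → Rt u v = 0)
    (hRt1 : ∀ u, Rt u u = 1)
    (hRt2 : ∀ u v i, BruhatLE cs u v → u ≠ v → cs.IsRightDescent v i →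
      (cs.IsRightDescent u i → Rt u v = Rt (u * cs.simple i) (v * cs.simple i)) ∧
      (¬ cs.IsRightDescent u i →
        Rt u v = Rt (u * cs.simple i) (v * cs.simple i) + X * Rt u (v * cs.simple i)))
    (u v : W) (huv : BruhatLE cs u v)
    (hfin : {w | BruhatLE cs u w ∧ BruhatLE cs w v}.Finite) :
    ∑ w ∈ hfin.toFinset,
      (-1 : Polynomial ℤ) ^ (cs.length w - cs.length u) * Rt u w * Rt w v =
      if u = v then 1 else 0 := by
  have hsub : hfin.toFinset ⊆ (InvAux.finite_le cs v).toFinset := by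
    intro w hw
    rw [Set.Finite.mem_toFinset] at hw ⊢
    exact hw.2
  have hext : ∑ w ∈ hfin.toFinset,
        (-1 : Polynomial ℤ) ^ (cs.length w - cs.length u) * Rt u w * Rt w v
      = ∑ w ∈ (InvAux.finite_le cs v).toFinset,
        (-1 : Polynomial ℤ) ^ (cs.length w - cs.length u) * Rt u w * Rt w v := by
    apply Finset.sum_subset hsub
    intro w hw hnot
    rw [Set.Finite.mem_toFinset] at hw hnot
    have hnle : ¬ BruhatLE cs u w := fun h => hnot ⟨h, hw⟩
    rw [hRt0 u w hnle, mul_zero, zero_mul]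
  have hsq : ((-1 : Polynomial ℤ)) ^ (cs.length u) * (-1) ^ (cs.length u) = 1 := by
    rw [← pow_add, ← two_mul, pow_mul]
    norm_num
  have hsign : ∀ w ∈ (InvAux.finite_le cs v).toFinset,
      (-1 : Polynomial ℤ) ^ (cs.length w - cs.length u) * Rt u w * Rt w v
        = (-1 : Polynomial ℤ) ^ (cs.length u) * ((-1) ^ (cs.length w) * Rt u w * Rt w v) := by
    intro w _
    by_cases hle : BruhatLE cs u w
    · have hlen : cs.length u ≤ cs.length w := InvAux.length_le_of_le cs hle
      have h1 : ((-1 : Polynomial ℤ)) ^ (cs.length w - cs.length u) * (-1) ^ (cs.length u)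
          = (-1) ^ (cs.length w) := by
        rw [← pow_add, Nat.sub_add_cancel hlen]
      have h3 : ((-1 : Polynomial ℤ)) ^ (cs.length w - cs.length u)
          = (-1) ^ (cs.length u) * (-1) ^ (cs.length w) := by
        calc ((-1 : Polynomial ℤ)) ^ (cs.length w - cs.length u)
            = (-1) ^ (cs.length w - cs.length u) * ((-1) ^ (cs.length u) * (-1) ^ (cs.length u)) := by
              rw [hsq, mul_one]
          _ = ((-1) ^ (cs.length w - cs.length u) * (-1) ^ (cs.length u)) * (-1) ^ (cs.length u) := by
              ring
          _ = (-1) ^ (cs.length u) * (-1) ^ (cs.length w) := by rw [h1]; ring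
      rw [h3]
      ring
    · rw [hRt0 u w hle]
      ring
  rw [hext, Finset.sum_congr rfl hsign, ← Finset.mul_sum,
    InvAux.key cs Rt hRt0 hRt1 hRt2 (cs.length v) v rfl u]
  by_cases huv' : u = v
  · rw [if_pos huv', if_pos huv', hsq]
  · rw [if_neg huv', if_neg huv', mul_zero]

end InvAuxSection
end

section
/- In any Coxeter group W, for u < v in the Bruhat order, the interval [u,v] contains exactly as many elements of even length as elements of odd length; equivalently, the sum over w in [u,v] of (-1)^(ℓ(w)) equals 0. -/
/-!
Strong induction on `ℓ(v)`. Pick a right descent `s` of `v`. If `us > u`, the lifting property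
shows that `w ↦ ws` is a fixed-point-free involution of `[u,v]` that changes the parity of
`ℓ(w)`. If `us < u`, the elements of `[us,v]` not above `u` are exactly those of `[us,vs]` not
above `u`, so that `Σ[u,v] + Σ[us,vs] = Σ[us,v] + Σ[u,vs]`; the first case kills `Σ[us,v]` and
the induction hypothesis the two intervals below `vs`.

The lifting property comes from the subword property, which rests on the strong exchange
condition. That in turn comes from Tits' sign representation of `W` on `W × ZMod 2`, whose
existence shows that the parity of the number of occurrences of `t` in the right inversion
sequence of a word depends only on the product of the word.
-/

open Polynomial

variable {B W : Type*} [Group W] {M : CoxeterMatrix B}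

open List

namespace CoxeterSystem

variable (cs : CoxeterSystem M W)

local prefix:100 "s " => cs.simple
local prefix:100 "π " => cs.wordProd
local prefix:100 "ℓ " => cs.length
local prefix:100 "ris " => cs.rightInvSeq

theorem simple_mul_mul_simple_eq_simple_iff {t : W} (i : B) : s i * t * s i = s i ↔ t = s i := by
  constructor
  · intro h
    simpa [mul_assoc, simple_mul_simple_cancel_left] using congr_arg (s i * · * s i) h
  · rintro rfl
    rw [simple_mul_simple_self, one_mul]

theorem rightInvSeq_alternatingWord (i j : B) (n : ℕ) :
    ris (alternatingWord i j n) = ((range n).map fun r => s j * (s i * s j) ^ r).reverse := by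
  induction n generalizing i j with
  | zero => simp [alternatingWord]
  | succ n ih =>
    have hconj (r : ℕ) :
        MulAut.conj (s j) (s i * (s j * s i) ^ r) = s j * (s i * s j) ^ (r + 1) := by
      have : SemiconjBy (s j) (s i * s j) (s j * s i) := by simp [SemiconjBy, mul_assoc]
      rw [MulAut.conj_apply, inv_simple, pow_succ']
      simp only [mul_assoc, (this.pow_right r).eq]
    rw [alternatingWord_succ, rightInvSeq_concat, ih, range_succ_eq_map]
    simp [map_reverse, hconj, Function.comp_def]

theorem even_count_rightInvSeq_alternatingWord [DecidableEq W] (i j : B) (t : W) :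
    Even ((ris (alternatingWord i j (2 * M i j))).count t) := by
  have hperiod (r : ℕ) : s j * (s i * s j) ^ (M i j + r) = s j * (s i * s j) ^ r := by
    rw [pow_add, simple_mul_simple_pow, one_mul]
  rw [rightInvSeq_alternatingWord, two_mul, range_add]
  simp [Function.comp_def, hperiod]

theorem prod_map_alternatingWord_two_mul {G : Type*} [Monoid G] (f : B → G) (i j : B) (k : ℕ) :
    ((alternatingWord i j (2 * k)).map f).prod = (f i * f j) ^ k := by
  induction k with
  | zero => simp [alternatingWord]
  | succ k ih =>
    rw [show 2 * (k + 1) = 2 * k + 1 + 1 by ring, alternatingWord_succ', alternatingWord_succ']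
    simp [ih, pow_succ', mul_assoc]

section SignRepresentation

variable [DecidableEq W]

def signedConjFun (i : B) (p : W × ZMod 2) : W × ZMod 2 :=
  (s i * p.1 * s i, if p.1 = s i then p.2 + 1 else p.2)

theorem signedConjFun_involutive (i : B) : Function.Involutive (cs.signedConjFun i) := by
  rintro ⟨t, a⟩
  simp only [signedConjFun, simple_mul_mul_simple_eq_simple_iff, Prod.mk.injEq]
  refine ⟨by simp [mul_assoc], ?_⟩
  split_ifs <;> simp [add_assoc, CharTwo.add_self_eq_zero]

def signedConj (i : B) : Equiv.Perm (W × ZMod 2) := (cs.signedConjFun_involutive i).toPerm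

theorem prod_map_signedConj_apply (ω : List B) (t : W) (a : ZMod 2) :
    (ω.map cs.signedConj).prod (t, a) = (π ω * t * (π ω)⁻¹, a + (ris ω).count t) := by
  induction ω with
  | nil => simp
  | cons i ω ih =>
    have hcond : π ω * t * (π ω)⁻¹ = s i ↔ (π ω)⁻¹ * s i * π ω = t := by
      constructor <;> intro h <;> simp [← h, mul_assoc]
    simp only [map_cons, prod_cons, Equiv.Perm.mul_apply, ih, signedConj, Function.Involutive.coe_toPerm, signedConjFun, hcond, wordProd_cons,
      rightInvSeq, count_cons, beq_iff_eq, mul_inv_rev, inv_simple, Prod.mk.injEq]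
    refine ⟨by group, ?_⟩
    split_ifs <;> push_cast <;> ring

theorem isLiftable_signedConj : M.IsLiftable cs.signedConj := by
  intro i j
  ext1 ⟨t, a⟩
  have hπ : π (alternatingWord i j (2 * M i j)) = 1 := by
    rw [prod_alternatingWord_eq_mul_pow]
    simp [simple_mul_simple_pow]
  rw [← prod_map_alternatingWord_two_mul, prod_map_signedConj_apply, hπ,
    ZMod.natCast_eq_zero_iff_even.mpr (cs.even_count_rightInvSeq_alternatingWord i j t)]
  simp

def signRep : W →* Equiv.Perm (W × ZMod 2) := cs.lift ⟨cs.signedConj, cs.isLiftable_signedConj⟩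

theorem signRep_wordProd_apply (ω : List B) (t : W) (a : ZMod 2) :
    cs.signRep (π ω) (t, a) = (π ω * t * (π ω)⁻¹, a + (ris ω).count t) := by
  rw [← prod_map_signedConj_apply, wordProd, map_list_prod, map_map]
  congr 3
  exact funext (cs.lift_apply_simple cs.isLiftable_signedConj)

theorem signRep_apply (w t : W) (a : ZMod 2) :
    cs.signRep w (t, a) = (w * t * w⁻¹, a + (cs.signRep w (t, 0)).2) := by
  obtain ⟨ω, -, rfl⟩ := cs.exists_isReduced w
  simp [signRep_wordProd_apply]

theorem signRep_self_apply {t : W} (ht : cs.IsReflection t) (a : ZMod 2) :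
    cs.signRep t (t, a) = (t, a + 1) := by
  obtain ⟨w, i, rfl⟩ := ht
  set c₁ := (cs.signRep w⁻¹ (w * s i * w⁻¹, 0)).2
  set c₂ := (cs.signRep w (s i, 0)).2
  have hinv (b : ZMod 2) : cs.signRep w⁻¹ (w * s i * w⁻¹, b) = (s i, b + c₁) := by
    rw [signRep_apply, Prod.mk.injEq]
    exact ⟨by group, rfl⟩
  have hfwd (b : ZMod 2) : cs.signRep w (s i, b) = (w * s i * w⁻¹, b + c₂) := signRep_apply ..
  have hsimple (b : ZMod 2) : cs.signRep (s i) (s i, b) = (s i, b + 1) := by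
    simp [signRep, signedConj, signedConjFun, simple_mul_simple_self]
  have hcancel : c₁ + c₂ = 0 := by
    have h : cs.signRep w (cs.signRep w⁻¹ (w * s i * w⁻¹, 0)) = (w * s i * w⁻¹, 0) := by
      rw [← Equiv.Perm.mul_apply, ← map_mul, mul_inv_cancel, map_one, Equiv.Perm.one_apply]
    rw [hinv, hfwd, Prod.mk.injEq] at h
    simpa using h.2
  rw [map_mul, map_mul, map_inv, Equiv.Perm.mul_apply, Equiv.Perm.mul_apply, ← map_inv, hinv,
    hsimple, hfwd]
  congr 1
  linear_combination hcancel

end SignRepresentation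

/-- The strong exchange condition. -/
theorem mem_rightInvSeq_of_length_mul_lt (ω : List B) {t : W} (ht : cs.IsReflection t)
    (hlt : ℓ (π ω * t) < ℓ (π ω)) : t ∈ ris ω := by
  classical
  obtain ⟨α, hα, hαω⟩ := cs.exists_isReduced (π ω * t)
  have hω : π ω = π α * t := by rw [← hαω, mul_assoc, ht.mul_self, mul_one]
  have hα_count : (ris α).count t = 0 := by
    refine count_eq_zero.mpr fun hmem => ?_
    have := (cs.isRightInversion_of_mem_rightInvSeq hα hmem).2
    rw [← hω, ← hαω] at this
    omega
  have hcount := congr_arg Prod.snd (cs.signRep_wordProd_apply ω t 0)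
  rw [hω, map_mul, Equiv.Perm.mul_apply, cs.signRep_self_apply ht, signRep_wordProd_apply,
    hα_count, ← hω] at hcount
  refine count_pos_iff.mp (Nat.pos_of_ne_zero fun h0 => ?_)
  simp [h0] at hcount

theorem exists_sublist_wordProd_eq_mul (ω : List B) {t : W} (ht : cs.IsReflection t)
    (hlt : ℓ (π ω * t) < ℓ (π ω)) : ∃ ω', ω' <+ ω ∧ π ω' = π ω * t := by
  obtain ⟨j, hj, rfl⟩ := getElem_of_mem (cs.mem_rightInvSeq_of_length_mul_lt ω ht hlt)
  refine ⟨ω.eraseIdx j, eraseIdx_sublist _ _, ?_⟩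
  rw [← cs.wordProd_mul_getD_rightInvSeq, getD_eq_getElem]

theorem bruhatLE_mul_of_length_lt {u t : W} (ht : cs.IsReflection t) (h : ℓ u < ℓ (u * t)) :
    BruhatLE cs u (u * t) :=
  Relation.ReflTransGen.single ⟨t, ht, rfl, h⟩

theorem bruhatLE_mul_simple {w : W} {i : B} (h : ¬cs.IsRightDescent w i) :
    BruhatLE cs w (w * s i) :=
  cs.bruhatLE_mul_of_length_lt (cs.isReflection_simple i) (by
    rw [cs.not_isRightDescent_iff.mp h]; omega)

theorem mul_simple_bruhatLE {w : W} {i : B} (h : cs.IsRightDescent w i) :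
    BruhatLE cs (w * s i) w := by
  simpa using cs.bruhatLE_mul_simple (cs.isRightDescent_iff_not_isRightDescent_mul.mp h)

theorem length_le_of_bruhatLE {u v : W} (h : BruhatLE cs u v) : ℓ u ≤ ℓ v := by
  induction h with
  | refl => rfl
  | tail _ e ih => obtain ⟨_, _, _, hlt⟩ := e; omega

theorem length_lt_of_bruhatLE_of_ne {u v : W} (h : BruhatLE cs u v) (hne : u ≠ v) :
    ℓ u < ℓ v := by
  obtain rfl | ⟨w, huw, _, _, _, hlt⟩ := h.cases_tail
  · exact absurd rfl hne
  · exact (cs.length_le_of_bruhatLE huw).trans_lt hlt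

theorem exists_sublist_of_bruhatLE {u : W} {ω : List B} (h : BruhatLE cs u (π ω)) :
    ∃ χ, χ <+ ω ∧ π χ = u := by
  induction h using Relation.ReflTransGen.head_induction_on with
  | refl => exact ⟨ω, Sublist.refl ω, rfl⟩
  | head e _ ih =>
    obtain ⟨t, ht, rfl, hlt⟩ := e
    obtain ⟨χ, hχω, hχ⟩ := ih
    obtain ⟨χ', hχ'χ, hχ'⟩ := cs.exists_sublist_wordProd_eq_mul χ ht (by
      rwa [hχ, mul_assoc, ht.mul_self, mul_one])
    exact ⟨χ', hχ'χ.trans hχω, by rw [hχ', hχ, mul_assoc, ht.mul_self, mul_one]⟩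

theorem finite_setOf_bruhatLE (v : W) : {w | BruhatLE cs w v}.Finite := by
  obtain ⟨ω, -, rfl⟩ := cs.exists_isReduced v
  refine ((sublists ω).finite_toSet.image cs.wordProd).subset fun w hw => ?_
  obtain ⟨χ, hχ, rfl⟩ := cs.exists_sublist_of_bruhatLE hw
  exact ⟨χ, mem_sublists.mpr hχ, rfl⟩

theorem exists_isReduced_append_singleton {y : W} {i : B} (hy : cs.IsRightDescent y i) :
    ∃ α, cs.IsReduced (α ++ [i]) ∧ π α = y * s i ∧ π (α ++ [i]) = y := by
  obtain ⟨α, hα, hαy⟩ := cs.exists_isReduced (y * s i)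
  have hπ : π (α ++ [i]) = y := by
    rw [wordProd_append, wordProd_singleton, ← hαy, simple_mul_simple_cancel_right]
  refine ⟨α, ?_, hαy.symm, hπ⟩
  rw [IsReduced, hπ, length_append, length_singleton, ← hα.eq, ← hαy,
    cs.isRightDescent_iff.mp hy]

def SubwordPropertyUpTo (n : ℕ) : Prop :=
  ∀ ⦃ω χ : List B⦄, cs.IsReduced ω → ω.length ≤ n → χ <+ ω → BruhatLE cs (π χ) (π ω)

variable {cs}

theorem SubwordPropertyUpTo.mul_simple_bruhatLE {n : ℕ} (hP : cs.SubwordPropertyUpTo n)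
    {x y : W} {i : B} (hxy : BruhatLE cs x y) (hy : cs.IsRightDescent y i) (hn : ℓ y ≤ n) :
    BruhatLE cs (x * s i) y := by
  obtain ⟨α, hred, -, hπ⟩ := cs.exists_isReduced_append_singleton hy
  have hlen : (α ++ [i]).length ≤ n := by rw [← hred.eq, hπ]; exact hn
  obtain ⟨χ, hχ, rfl⟩ := cs.exists_sublist_of_bruhatLE (hπ ▸ hxy)
  obtain ⟨χ₁, χ₂, rfl, hχ₁, hχ₂⟩ := sublist_append_iff.mp hχ
  rw [← hπ]
  rcases sublist_singleton.mp hχ₂ with rfl | rfl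
  · simpa [wordProd_append] using hP hred hlen (hχ₁.append_right [i])
  · simpa [wordProd_append, mul_assoc] using hP hred hlen (hχ₁.trans (sublist_append_left α [i]))

theorem SubwordPropertyUpTo.mul_simple_bruhatLE_mul_simple {n : ℕ}
    (hP : cs.SubwordPropertyUpTo n) {x y : W} {i : B} (hxy : BruhatLE cs x y)
    (hy : ¬cs.IsRightDescent y i) (hn : ℓ y ≤ n) :
    BruhatLE cs (x * s i) (y * s i) := by
  induction hxy with
  | refl => exact Relation.ReflTransGen.refl
  | @tail w _ hxw e ih =>
    obtain ⟨t, ht, rfl, hlt⟩ := e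
    have hwt := cs.not_isRightDescent_iff.mp hy
    by_cases hw : cs.IsRightDescent w i
    · exact (hP.mul_simple_bruhatLE hxw hw (by omega)).trans
        ((cs.bruhatLE_mul_of_length_lt ht hlt).trans (cs.bruhatLE_mul_simple hy))
    · have hrefl : cs.IsReflection (s i * t * s i) := by
        simpa [inv_simple] using ht.conj (s i)
      have heq : w * s i * (s i * t * s i) = w * t * s i := by
        simp [mul_assoc, simple_mul_simple_cancel_left]
      have hlen : ℓ (w * s i) < ℓ (w * s i * (s i * t * s i)) := by
        rw [heq, hwt, cs.not_isRightDescent_iff.mp hw]; omega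
      exact (ih hw (by omega)).trans (heq ▸ cs.bruhatLE_mul_of_length_lt hrefl hlen)

variable (cs)

theorem subwordPropertyUpTo (n : ℕ) : cs.SubwordPropertyUpTo n := by
  induction n with
  | zero =>
    intro ω χ _ hlen hχ
    obtain rfl := List.length_eq_zero_iff.mp (Nat.le_zero.mp hlen)
    obtain rfl := sublist_nil.mp hχ
    exact Relation.ReflTransGen.refl
  | succ n ih =>
    intro ω χ hω hlen hχ
    obtain rfl | ⟨ω₁, i, rfl⟩ := eq_nil_or_concat' ω
    · exact ih hω (by simp) hχ
    have hω₁ : cs.IsReduced ω₁ := by simpa using hω.take ω₁.length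
    have hlen₁ : ω₁.length ≤ n := by simpa using hlen
    have hasc : ¬cs.IsRightDescent (π ω₁) i := by
      rw [cs.not_isRightDescent_iff, ← wordProd_singleton, ← wordProd_append, hω.eq, hω₁.eq]
      simp
    have hle : BruhatLE cs (π ω₁) (π (ω₁ ++ [i])) := by
      simpa [wordProd_append] using cs.bruhatLE_mul_simple hasc
    obtain ⟨χ₁, χ₂, rfl, hχ₁, hχ₂⟩ := sublist_append_iff.mp hχ
    have h₁ := ih hω₁ hlen₁ hχ₁
    rcases sublist_singleton.mp hχ₂ with rfl | rfl
    · rw [append_nil]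
      exact h₁.trans hle
    simp only [wordProd_append, wordProd_singleton]
    exact ih.mul_simple_bruhatLE_mul_simple h₁ hasc (hω₁.eq ▸ hlen₁)

theorem bruhatLE_of_sublist {ω χ : List B} (hω : cs.IsReduced ω) (hχ : χ <+ ω) :
    BruhatLE cs (π χ) (π ω) :=
  cs.subwordPropertyUpTo ω.length hω le_rfl hχ

theorem mul_simple_bruhatLE_of_bruhatLE {x y : W} {i : B} (hxy : BruhatLE cs x y)
    (hy : cs.IsRightDescent y i) : BruhatLE cs (x * s i) y :=
  (cs.subwordPropertyUpTo (ℓ y)).mul_simple_bruhatLE hxy hy le_rfl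

theorem bruhatLE_mul_simple_of_bruhatLE {x y : W} {i : B} (hxy : BruhatLE cs x y)
    (hy : cs.IsRightDescent y i) (hx : ¬cs.IsRightDescent x i) : BruhatLE cs x (y * s i) := by
  obtain ⟨α, hred, hα, hπ⟩ := cs.exists_isReduced_append_singleton hy
  have hαred : cs.IsReduced α := by simpa using hred.take α.length
  obtain ⟨χ, hχ, rfl⟩ := cs.exists_sublist_of_bruhatLE (hπ ▸ hxy)
  obtain ⟨χ₁, χ₂, rfl, hχ₁, hχ₂⟩ := sublist_append_iff.mp hχ
  rw [← hα]
  rcases sublist_singleton.mp hχ₂ with rfl | rfl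
  · simpa using cs.bruhatLE_of_sublist hαred hχ₁
  · refine (cs.bruhatLE_mul_simple hx).trans ?_
    rw [wordProd_append, wordProd_singleton, simple_mul_simple_cancel_right]
    exact cs.bruhatLE_of_sublist hαred hχ₁

theorem finite_bruhatInterval (u v : W) : {w | BruhatLE cs u w ∧ BruhatLE cs w v}.Finite :=
  (cs.finite_setOf_bruhatLE v).subset fun _ hw => hw.2

noncomputable def bruhatIcc (u v : W) : Finset W := (cs.finite_bruhatInterval u v).toFinset

variable {cs} in
theorem mem_bruhatIcc {u v w : W} :
    w ∈ cs.bruhatIcc u v ↔ BruhatLE cs u w ∧ BruhatLE cs w v :=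
  Set.Finite.mem_toFinset _

theorem neg_one_pow_length_mul_simple (w : W) (i : B) :
    (-1 : ℤ) ^ ℓ (w * s i) = -(-1) ^ ℓ w := by
  rcases cs.length_mul_simple w i with h | h
  · rw [h, pow_succ, mul_neg_one]
  · rw [← h, pow_succ, mul_neg_one, neg_neg]

theorem sum_bruhatIcc_eq_zero_of_not_isRightDescent_of_isRightDescent {u v : W} {i : B}
    (hu : ¬cs.IsRightDescent u i) (hv : cs.IsRightDescent v i) :
    ∑ w ∈ cs.bruhatIcc u v, (-1 : ℤ) ^ ℓ w = 0 := by
  refine Finset.sum_involution (fun w _ => w * s i)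
    (fun w _ => by rw [neg_one_pow_length_mul_simple, add_neg_cancel])
    (fun w _ _ h => cs.length_mul_simple_ne w i (congrArg cs.length h)) (fun w hw => ?_)
    (fun w _ => simple_mul_simple_cancel_right cs i)
  obtain ⟨huw, hwv⟩ := mem_bruhatIcc.mp hw
  refine mem_bruhatIcc.mpr ⟨?_, cs.mul_simple_bruhatLE_of_bruhatLE hwv hv⟩
  by_cases hw : cs.IsRightDescent w i
  · exact cs.bruhatLE_mul_simple_of_bruhatLE huw hw hu
  · exact huw.trans (cs.bruhatLE_mul_simple hw)

theorem sum_bruhatIcc_add_sum_bruhatIcc {u v : W} {i : B}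
    (hu : cs.IsRightDescent u i) (hv : cs.IsRightDescent v i) :
    ∑ w ∈ cs.bruhatIcc u v, (-1 : ℤ) ^ ℓ w + ∑ w ∈ cs.bruhatIcc (u * s i) (v * s i), (-1) ^ ℓ w =
      ∑ w ∈ cs.bruhatIcc (u * s i) v, (-1) ^ ℓ w + ∑ w ∈ cs.bruhatIcc u (v * s i), (-1) ^ ℓ w := by
  classical
  have hfilter (y : W) : (cs.bruhatIcc (u * s i) y).filter (BruhatLE cs u) = cs.bruhatIcc u y := by
    ext w
    simp only [Finset.mem_filter, mem_bruhatIcc]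
    exact ⟨fun ⟨⟨_, hwy⟩, huw⟩ => ⟨huw, hwy⟩,
      fun ⟨huw, hwy⟩ => ⟨⟨(cs.mul_simple_bruhatLE hu).trans huw, hwy⟩, huw⟩⟩
  have hrest : (cs.bruhatIcc (u * s i) v).filter (¬BruhatLE cs u ·) =
      (cs.bruhatIcc (u * s i) (v * s i)).filter (¬BruhatLE cs u ·) := by
    ext w
    simp only [Finset.mem_filter, mem_bruhatIcc]
    refine ⟨fun ⟨⟨huw, hwv⟩, hnot⟩ => ⟨⟨huw, ?_⟩, hnot⟩,
      fun ⟨⟨huw, hwv⟩, hnot⟩ => ⟨⟨huw, hwv.trans (cs.mul_simple_bruhatLE hv)⟩, hnot⟩⟩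
    have hw : ¬cs.IsRightDescent w i := fun hw =>
      hnot (by simpa using cs.mul_simple_bruhatLE_of_bruhatLE huw hw)
    exact cs.bruhatLE_mul_simple_of_bruhatLE hwv hv hw
  rw [← Finset.sum_filter_add_sum_filter_not (cs.bruhatIcc (u * s i) v) (BruhatLE cs u),
    ← Finset.sum_filter_add_sum_filter_not (cs.bruhatIcc (u * s i) (v * s i)) (BruhatLE cs u),
    hfilter, hfilter, hrest]
  ring

theorem sum_bruhatIcc_eq_zero {u v : W} (hne : u ≠ v) :
    ∑ w ∈ cs.bruhatIcc u v, (-1 : ℤ) ^ ℓ w = 0 := by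
  induction hn : ℓ v using Nat.strong_induction_on generalizing u v with
  | _ n ih =>
  by_cases huv : BruhatLE cs u v
  swap
  · refine Finset.sum_eq_zero fun w hw => absurd ?_ huv
    obtain ⟨huw, hwv⟩ := mem_bruhatIcc.mp hw
    exact huw.trans hwv
  have hlt := cs.length_lt_of_bruhatLE_of_ne huv hne
  obtain ⟨i, hv⟩ := cs.exists_rightDescent_of_ne_one (w := v) (by rintro rfl; simp at hlt)
  by_cases hu : cs.IsRightDescent u i
  swap
  · exact cs.sum_bruhatIcc_eq_zero_of_not_isRightDescent_of_isRightDescent hu hv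
  have hvs : ℓ (v * s i) < n := hn ▸ hv
  have h₁ := cs.sum_bruhatIcc_eq_zero_of_not_isRightDescent_of_isRightDescent
    (cs.isRightDescent_iff_not_isRightDescent_mul.mp hu) hv
  have h₂ := ih _ hvs (fun h => hne (mul_right_cancel h)) rfl
  have h₃ := ih _ hvs
    (fun h => cs.isRightDescent_iff_not_isRightDescent_mul.mp hv (by rwa [← h])) rfl
  linarith [cs.sum_bruhatIcc_add_sum_bruhatIcc hu hv]

end CoxeterSystem

theorem interval_alternating_sum_eq_zero_general (cs : CoxeterSystem M W)
    (u v : W) (hne : u ≠ v)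
    (hfin : {w | BruhatLE cs u w ∧ BruhatLE cs w v}.Finite) :
    ∑ w ∈ hfin.toFinset, (-1 : ℤ) ^ (cs.length w) = 0 :=
  cs.sum_bruhatIcc_eq_zero hne

/-- Any nontrivial Bruhat interval `[u,v]` has as many elements of even length as of odd
length: the sum of `(-1)^{ℓ(w)}` over the interval vanishes. -/
theorem interval_alternating_sum_eq_zero (cs : CoxeterSystem M W)
    (u v : W) (huv : BruhatLE cs u v) (hne : u ≠ v)
    (hfin : {w | BruhatLE cs u w ∧ BruhatLE cs w v}.Finite) :
    ∑ w ∈ hfin.toFinset, (-1 : ℤ) ^ (cs.length w) = 0 :=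
  interval_alternating_sum_eq_zero_general cs u v hne hfin
end
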